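/- Security of refinement: if SK_A and SK_C are instances of the security model, SK_A satisfies SC_A ∧ LR_A, SK_C satisfies SC_Δ ∧ LR_Δ (the unwinding conditions restricted to the new state variables, for all concrete events), and SK_A ⊑_{Ψ,Θ} SK_C, then SK_C satisfies noninfluence. -/
import Mathlib


open scoped Classical

universe u v w

variable {S : Type u} {E : Type v} {D : Type w}

def run (φ : E → Set (S × S)) : List E → Set (S × S)
  | [] => {p | p.2 = p.1}
  | e :: es => {p | ∃ m, (p.1, m) ∈ φ e ∧ (m, p.2) ∈ run φ es}

def execution (φ : E → Set (S × S)) (s : S) (es : List E) : Set S :=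
  {t | (s, t) ∈ run φ es}

def reachable (φ : E → Set (S × S)) (s0 : S) (s : S) : Prop :=
  ∃ es, (s0, s) ∈ run φ es

def sources (φ : E → Set (S × S)) (kdom : S → E → D) (intf : D → D → Prop) :
    List E → S → D → Set D
  | [], _, d => {d}
  | e :: es, s, d =>
      {w | ∃ s', (s, s') ∈ φ e ∧ w ∈ sources φ kdom intf es s' d} ∪
      {w | w = kdom s e ∧
        ∃ v s', intf w v ∧ (s, s') ∈ φ e ∧ v ∈ sources φ kdom intf es s' d}

noncomputable def ipurge (φ : E → Set (S × S)) (kdom : S → E → D)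
    (intf : D → D → Prop) : List E → D → Set S → List E
  | [], _, _ => []
  | e :: es, d, ss =>
      if ∃ s ∈ ss, kdom s e ∈ sources φ kdom intf (e :: es) s d then
        e :: ipurge φ kdom intf es d {s' | ∃ s ∈ ss, (s, s') ∈ φ e}
      else ipurge φ kdom intf es d ss

/-- observational equivalence: (s ⊳ es1) ≃d≃ (t ⊳ es2) -/
def obseq (φ : E → Set (S × S)) (vpeq : S → D → S → Prop)
    (s : S) (es1 : List E) (d : D) (t : S) (es2 : List E) : Prop :=
  ∀ s' ∈ execution φ s es1, ∀ t' ∈ execution φ t es2, vpeq s' d t'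

/-- step consistent condition of event, with separate hypothesis/conclusion
equivalence relations (used for the Δ-restricted variants). -/
def SCe2 (φ : E → Set (S × S)) (kdom : S → E → D) (intf : D → D → Prop)
    (vpeqH vpeqCon : S → D → S → Prop) (sched : D) (s0 : S) (e : E) : Prop :=
  ∀ d s t, reachable φ s0 s → reachable φ s0 t → vpeqH s d t → vpeqH s sched t →
    intf (kdom s e) d → vpeqH s (kdom s e) t →
    ∀ s' t', (s, s') ∈ φ e → (t, t') ∈ φ e → vpeqCon s' d t'

/-- locally respects condition of event. -/
def LRe2 (φ : E → Set (S × S)) (kdom : S → E → D) (intf : D → D → Prop)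
    (vpeqCon : S → D → S → Prop) (s0 : S) (e : E) : Prop :=
  ∀ d s s', reachable φ s0 s → ¬ intf (kdom s e) d → (s, s') ∈ φ e →
    vpeqCon s d s'

def SCe (φ : E → Set (S × S)) (kdom : S → E → D) (intf : D → D → Prop)
    (vpeq : S → D → S → Prop) (sched : D) (s0 : S) (e : E) : Prop :=
  SCe2 φ kdom intf vpeq vpeq sched s0 e

def LRe (φ : E → Set (S × S)) (kdom : S → E → D) (intf : D → D → Prop)
    (vpeq : S → D → S → Prop) (s0 : S) (e : E) : Prop :=
  LRe2 φ kdom intf vpeq s0 e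

def noninfluence (φ : E → Set (S × S)) (kdom : S → E → D) (intf : D → D → Prop)
    (vpeq : S → D → S → Prop) (sched : D) (s0 : S) : Prop :=
  ∀ d es s t, reachable φ s0 s → reachable φ s0 t → vpeq s sched t →
    (∀ u ∈ sources φ kdom intf es s d, vpeq s u t) →
    obseq φ vpeq s es d t (ipurge φ kdom intf es d {t})

def weak_noninfluence (φ : E → Set (S × S)) (kdom : S → E → D)
    (intf : D → D → Prop) (vpeq : S → D → S → Prop) (sched : D) (s0 : S) : Prop :=
  ∀ d es1 es2 s t, reachable φ s0 s → reachable φ s0 t →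
    (∀ u ∈ sources φ kdom intf es1 s d, vpeq s u t) → vpeq s sched t →
    ipurge φ kdom intf es1 d {s} = ipurge φ kdom intf es2 d {t} →
    obseq φ vpeq s es1 d t es2

def nonleakage (φ : E → Set (S × S)) (kdom : S → E → D) (intf : D → D → Prop)
    (vpeq : S → D → S → Prop) (sched : D) (s0 : S) : Prop :=
  ∀ d es s t, reachable φ s0 s → reachable φ s0 t → vpeq s sched t →
    (∀ u ∈ sources φ kdom intf es s d, vpeq s u t) →
    obseq φ vpeq s es d t es

def noninterference_r (φ : E → Set (S × S)) (kdom : S → E → D)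
    (intf : D → D → Prop) (vpeq : S → D → S → Prop) (s0 : S) : Prop :=
  ∀ d es s, reachable φ s0 s →
    obseq φ vpeq s es d s (ipurge φ kdom intf es d {s})

def noninterference (φ : E → Set (S × S)) (kdom : S → E → D)
    (intf : D → D → Prop) (vpeq : S → D → S → Prop) (s0 : S) : Prop :=
  ∀ d es, obseq φ vpeq s0 es d s0 (ipurge φ kdom intf es d {s0})

def weak_noninterference_r (φ : E → Set (S × S)) (kdom : S → E → D)
    (intf : D → D → Prop) (vpeq : S → D → S → Prop) (s0 : S) : Prop :=
  ∀ d es1 es2 s, reachable φ s0 s →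
    ipurge φ kdom intf es1 d {s} = ipurge φ kdom intf es2 d {s} →
    obseq φ vpeq s es1 d s es2

def weak_noninterference (φ : E → Set (S × S)) (kdom : S → E → D)
    (intf : D → D → Prop) (vpeq : S → D → S → Prop) (s0 : S) : Prop :=
  ∀ d es1 es2,
    ipurge φ kdom intf es1 d {s0} = ipurge φ kdom intf es2 d {s0} →
    obseq φ vpeq s0 es1 d s0 es2

section UnwindingProof

variable (φ : E → Set (S × S)) (kdom : S → E → D) (intf : D → D → Prop)
  (vpeq : S → D → S → Prop) (sched : D) (s0 : S)

theorem run_snoc : ∀ (es : List E) (e : E) (s t t' : S),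
    (s, t) ∈ run φ es → (t, t') ∈ φ e → (s, t') ∈ run φ (es ++ [e]) := by
  intro es
  induction es with
  | nil =>
    intro e s t t' h1 h2
    obtain rfl : t = s := h1
    exact ⟨t', h2, rfl⟩
  | cons a as ih =>
    intro e s t t' h1 h2
    obtain ⟨m, hm, hms⟩ := h1
    exact ⟨m, hm, ih e m t t' hms h2⟩

theorem reachable_step {s s' : S} {e : E} (h : reachable φ s0 s)
    (h2 : (s, s') ∈ φ e) : reachable φ s0 s' := by
  obtain ⟨es, hr⟩ := h
  exact ⟨es ++ [e], run_snoc φ es e s0 s s' hr h2⟩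

section WithHyps

variable
    (hequiv : ∀ d, Equivalence (fun s t => vpeq s d t))
    (hkdom : ∀ s t e, vpeq s sched t → kdom s e = kdom t e)
    (henabled : ∀ s e, reachable φ s0 s → ∃ s', (s, s') ∈ φ e)
    (hsched : ∀ d, intf sched d)
    (hsched' : ∀ d, intf d sched → d = sched)
    (hSC : ∀ e, SCe φ kdom intf vpeq sched s0 e)
    (hLR : ∀ e, LRe φ kdom intf vpeq s0 e)

include hequiv hkdom hsched' hSC hLR in
theorem vpeq_sched_step {s t s' t' : S} {e : E}
    (hrs : reachable φ s0 s) (hrt : reachable φ s0 t)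
    (hst : vpeq s sched t) (hs : (s, s') ∈ φ e) (ht : (t, t') ∈ φ e) :
    vpeq s' sched t' := by
  by_cases hi : intf (kdom s e) sched
  · have hk : kdom s e = sched := hsched' _ hi
    exact hSC e sched s t hrs hrt hst hst hi (by rw [hk]; exact hst) s' t' hs ht
  · have h1 : vpeq s sched s' := hLR e sched s s' hrs hi hs
    have hke : kdom t e = kdom s e := (hkdom s t e hst).symm
    have h2 : vpeq t sched t' := hLR e sched t t' hrt (by rw [hke]; exact hi) ht
    exact (hequiv sched).trans ((hequiv sched).symm h1) ((hequiv sched).trans hst h2)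

include henabled in
theorem d_in_sources : ∀ (es : List E) (s : S) (d : D), reachable φ s0 s →
    d ∈ sources φ kdom intf es s d := by
  intro es
  induction es with
  | nil => intro s d _; exact rfl
  | cons e es ih =>
    intro s d hrs
    obtain ⟨s', hs'⟩ := henabled s e hrs
    exact Or.inl ⟨s', hs', ih s' d (reachable_step φ s0 hrs hs')⟩

include hequiv hkdom henabled hsched' hSC hLR in
theorem sources_mono : ∀ (es : List E) (d : D) (s t : S),
    reachable φ s0 s → reachable φ s0 t → vpeq s sched t →
    sources φ kdom intf es s d ⊆ sources φ kdom intf es t d := by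
  intro es
  induction es with
  | nil => intro d s t _ _ _; exact subset_rfl
  | cons e es ih =>
    intro d s t hrs hrt hst w hw
    rcases hw with ⟨s', hs', hw'⟩ | ⟨hwk, v, s', hiv, hs', hv⟩
    · obtain ⟨t', ht'⟩ := henabled t e hrt
      have hstep := vpeq_sched_step φ kdom intf vpeq sched s0 hequiv hkdom hsched' hSC hLR hrs hrt hst hs' ht'
      exact Or.inl ⟨t', ht', ih d s' t' (reachable_step φ s0 hrs hs')
        (reachable_step φ s0 hrt ht') hstep hw'⟩
    · obtain ⟨t', ht'⟩ := henabled t e hrt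
      have hstep := vpeq_sched_step φ kdom intf vpeq sched s0 hequiv hkdom hsched' hSC hLR hrs hrt hst hs' ht'
      exact Or.inr ⟨hwk.trans (hkdom s t e hst), v, t', hiv, ht',
        ih d s' t' (reachable_step φ s0 hrs hs') (reachable_step φ s0 hrt ht') hstep hv⟩

include hequiv hkdom henabled hsched hsched' hSC hLR in
theorem unwinding_main : ∀ (es : List E) (d : D) (s t : S) (ss : Set S),
    reachable φ s0 s → t ∈ ss →
    (∀ t1 ∈ ss, reachable φ s0 t1 ∧ vpeq s sched t1 ∧
      ∀ u ∈ sources φ kdom intf es s d, vpeq s u t1) →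
    obseq φ vpeq s es d t (ipurge φ kdom intf es d ss) := by
  intro es
  induction es with
  | nil =>
    intro d s t ss hrs hts hss
    intro sf hsf tf htf
    obtain rfl : sf = s := hsf
    obtain rfl : tf = t := htf
    exact (hss _ hts).2.2 d rfl
  | cons e es ih =>
    intro d s t ss hrs hts hss
    by_cases hT : ∃ s1 ∈ ss, kdom s1 e ∈ sources φ kdom intf (e :: es) s1 d
    · -- event is kept
      rw [show ipurge φ kdom intf (e :: es) d ss
          = e :: ipurge φ kdom intf es d {s' | ∃ s1 ∈ ss, (s1, s') ∈ φ e} by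
        simp only [ipurge]; rw [if_pos hT]]
      intro sf hsf tf htf
      obtain ⟨m, hm, hmsf⟩ := hsf
      obtain ⟨n, hn, hntf⟩ := htf
      refine ih d m n {s' | ∃ s1 ∈ ss, (s1, s') ∈ φ e}
        (reachable_step φ s0 hrs hm) ⟨t, hts, hn⟩ ?_ sf hmsf tf hntf
      rintro t2 ⟨t1, ht1, ht2⟩
      obtain ⟨hrt1, hst1, hu1⟩ := hss t1 ht1
      refine ⟨reachable_step φ s0 hrt1 ht2,
        vpeq_sched_step φ kdom intf vpeq sched s0 hequiv hkdom hsched' hSC hLR hrs hrt1 hst1 hm ht2, ?_⟩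
      intro u hu
      by_cases hiu : intf (kdom s e) u
      · have h1 : vpeq s u t1 := hu1 u (Or.inl ⟨m, hm, hu⟩)
        have h2 : vpeq s (kdom s e) t1 := hu1 (kdom s e) (Or.inr ⟨rfl, u, m, hiu, hm, hu⟩)
        exact hSC e u s t1 hrs hrt1 h1 hst1 hiu h2 m t2 hm ht2
      · have h1 : vpeq s u m := hLR e u s m hrs hiu hm
        have hke : kdom t1 e = kdom s e := (hkdom s t1 e hst1).symm
        have h2 : vpeq t1 u t2 := hLR e u t1 t2 hrt1 (by rw [hke]; exact hiu) ht2
        have h3 : vpeq s u t1 := hu1 u (Or.inl ⟨m, hm, hu⟩)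
        exact (hequiv u).trans ((hequiv u).symm h1) ((hequiv u).trans h3 h2)
    · -- event is purged
      rw [show ipurge φ kdom intf (e :: es) d ss = ipurge φ kdom intf es d ss by
        simp only [ipurge]; rw [if_neg hT]]
      have hks : kdom s e ∉ sources φ kdom intf (e :: es) s d := by
        intro hmem
        obtain ⟨_, hst, _⟩ := hss t hts
        apply hT
        refine ⟨t, hts, ?_⟩
        rw [← hkdom s t e hst]
        exact sources_mono φ kdom intf vpeq sched s0 hequiv hkdom henabled hsched' hSC hLR
          (e :: es) d s t hrs (hss t hts).1 hst hmem
      intro sf hsf tf htf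
      obtain ⟨m, hm, hmsf⟩ := hsf
      have hrm : reachable φ s0 m := reachable_step φ s0 hrs hm
      have hnis : ¬ intf (kdom s e) sched := by
        intro hi
        apply hks
        exact Or.inr ⟨(hsched' _ hi).symm ▸ rfl, d, m,
          (hsched' _ hi) ▸ hsched d, hm, d_in_sources φ kdom intf s0 henabled es m d hrm⟩
      have hsm : vpeq s sched m := hLR e sched s m hrs hnis hm
      refine ih d m t ss hrm hts ?_ sf hmsf tf htf
      intro t1 ht1
      obtain ⟨hrt1, hst1, hu1⟩ := hss t1 ht1
      refine ⟨hrt1, (hequiv sched).trans ((hequiv sched).symm hsm) hst1, ?_⟩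
      intro u hu
      have hiu : ¬ intf (kdom s e) u := by
        intro hi
        exact hks (Or.inr ⟨rfl, u, m, hi, hm, hu⟩)
      have h1 : vpeq s u m := hLR e u s m hrs hiu hm
      have h3 : vpeq s u t1 := hu1 u (Or.inl ⟨m, hm, hu⟩)
      exact (hequiv u).trans ((hequiv u).symm h1) h3

include hequiv hkdom henabled hsched hsched' hSC hLR in
theorem unwinding : noninfluence φ kdom intf vpeq sched s0 := by
  intro d es s t hrs hrt hst hsrc
  refine unwinding_main φ kdom intf vpeq sched s0 hequiv hkdom henabled hsched hsched' hSC hLR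
    es d s t {t} hrs rfl ?_
  rintro t1 rfl
  exact ⟨hrt, hst, hsrc⟩

end WithHyps
end UnwindingProof

theorem run_refine {SA SC : Type u} {EA EC : Type v}
    (φA : EA → Set (SA × SA)) (φC : EC → Set (SC × SC))
    (Ψ : SC → SA) (Θ : EC → Option EA)
    (hsim : ∀ e ea s t, Θ e = some ea → (s, t) ∈ φC e → (Ψ s, Ψ t) ∈ φA ea)
    (hstutter : ∀ e s t, Θ e = none → (s, t) ∈ φC e → Ψ t = Ψ s) :
    ∀ (es : List EC) (x y : SC), (x, y) ∈ run φC es →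
      (Ψ x, Ψ y) ∈ run φA (es.filterMap Θ) := by
  intro es
  induction es with
  | nil =>
    intro x y h
    obtain rfl : y = x := h
    exact rfl
  | cons e es ih =>
    intro x y h
    obtain ⟨m, hm, hmy⟩ := h
    cases hΘ : Θ e with
    | none =>
      rw [List.filterMap_cons_none hΘ]
      have h2 := ih m y hmy
      rw [hstutter e x m hΘ hm] at h2
      exact h2
    | some ea =>
      rw [List.filterMap_cons_some hΘ]
      exact ⟨Ψ m, hsim e ea x m hΘ hm, ih m y hmy⟩

/-- security of refinement: if SK_A and SK_C are instances of
the security model, SK_A satisfies SC_A ∧ LR_A, SK_C satisfies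
SC_Δ ∧ LR_Δ, and SK_A ⊑_{Ψ,Θ} SK_C, then SK_C satisfies noninfluence. -/
theorem refinement_security {SA SC : Type u} {EA EC : Type v}
    (φA : EA → Set (SA × SA)) (φC : EC → Set (SC × SC))
    (s0A : SA) (s0C : SC) (Ψ : SC → SA) (Θ : EC → Option EA)
    (kdomA : SA → EA → D) (kdomC : SC → EC → D) (intf : D → D → Prop)
    (vpeqA : SA → D → SA → Prop) (vpeqC : SC → D → SC → Prop)
    (vpeqD : SC → D → SC → Prop) (sched : D)
    -- SK_A is an instance of the security model
    (hequivA : ∀ d, Equivalence (fun s t => vpeqA s d t))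
    (hkdomA : ∀ s t ea, vpeqA s sched t → kdomA s ea = kdomA t ea)
    (henabledA : ∀ s ea, reachable φA s0A s → ∃ s', (s, s') ∈ φA ea)
    -- SK_C is an instance of the security model
    (hequivC : ∀ d, Equivalence (fun s t => vpeqC s d t))
    (hkdomC : ∀ s t e, vpeqC s sched t → kdomC s e = kdomC t e)
    (henabledC : ∀ s e, reachable φC s0C s → ∃ s', (s, s') ∈ φC e)
    (hsched : ∀ d, intf sched d)
    (hsched' : ∀ d, intf d sched → d = sched)
    -- refinement conditions SK_A ⊑_{Ψ,Θ} SK_C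
    (hinit : Ψ s0C = s0A)
    (hsurj : ∀ ea, ∃ e, Θ e = some ea)
    (hsim : ∀ e ea s t, Θ e = some ea → (s, t) ∈ φC e →
      (Ψ s, Ψ t) ∈ φA ea)
    (hstutter : ∀ e s t, Θ e = none → (s, t) ∈ φC e → Ψ t = Ψ s)
    (hkdomR : ∀ e ea s, Θ e = some ea → kdomC s e = kdomA (Ψ s) ea)
    (hdecomp : ∀ s d t, vpeqC s d t ↔ (vpeqA (Ψ s) d (Ψ t) ∧ vpeqD s d t))
    -- unwinding conditions of SK_A
    (hSCA : ∀ ea, SCe2 φA kdomA intf vpeqA vpeqA sched s0A ea)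
    (hLRA : ∀ ea, LRe2 φA kdomA intf vpeqA s0A ea)
    -- Δ-restricted unwinding conditions of SK_C
    (hSCD : ∀ e, SCe2 φC kdomC intf vpeqC vpeqD sched s0C e)
    (hLRD : ∀ e, LRe2 φC kdomC intf vpeqD s0C e) :
    noninfluence φC kdomC intf vpeqC sched s0C := by
  have hreach : ∀ s, reachable φC s0C s → reachable φA s0A (Ψ s) := by
    rintro s ⟨es, h⟩
    exact ⟨es.filterMap Θ, by
      rw [← hinit]; exact run_refine φA φC Ψ Θ hsim hstutter es s0C s h⟩
  have hSCC : ∀ e, SCe φC kdomC intf vpeqC sched s0C e := by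
    intro e d s t hrs hrt hdt hsc hi hkd s' t' hs ht
    have hD : vpeqD s' d t' := hSCD e d s t hrs hrt hdt hsc hi hkd s' t' hs ht
    rw [hdecomp]
    refine ⟨?_, hD⟩
    cases hΘ : Θ e with
    | none =>
      rw [hstutter e s s' hΘ hs, hstutter e t t' hΘ ht]
      exact ((hdecomp s d t).1 hdt).1
    | some ea =>
      have hk := hkdomR e ea s hΘ
      exact hSCA ea d (Ψ s) (Ψ t) (hreach s hrs) (hreach t hrt)
        ((hdecomp s d t).1 hdt).1 ((hdecomp s sched t).1 hsc).1
        (by rw [← hk]; exact hi)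
        (by rw [← hk]; exact ((hdecomp s (kdomC s e) t).1 hkd).1)
        (Ψ s') (Ψ t') (hsim e ea s s' hΘ hs) (hsim e ea t t' hΘ ht)
  have hLRC : ∀ e, LRe φC kdomC intf vpeqC s0C e := by
    intro e d s s' hrs hni hs
    have hD : vpeqD s d s' := hLRD e d s s' hrs hni hs
    rw [hdecomp]
    refine ⟨?_, hD⟩
    cases hΘ : Θ e with
    | none =>
      rw [hstutter e s s' hΘ hs]
      exact (hequivA d).refl _
    | some ea =>
      exact hLRA ea d (Ψ s) (Ψ s') (hreach s hrs)
        (by rw [← hkdomR e ea s hΘ]; exact hni) (hsim e ea s s' hΘ hs)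
  exact unwinding φC kdomC intf vpeqC sched s0C hequivC hkdomC henabledC hsched
    hsched' hSCC hLRC
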